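/- Let N ≥ 3 be an integer and α_N = [N(N-2)]^{(N-2)/4}. With p = (N+2)/(N-2), U(y) = α_N (1+|y|²)^{-(N-2)/2}, and ψ⁰(y) = ((N-2)/2) α_N (|y|²-1)/(1+|y|²)^{N/2}, the integral -∫_{ℝ^N} U(y)^p · ln(U(y)) · ψ⁰(y) dy equals Γ(N/2) π^{N/2} / (4 Γ(N+1)) · N^{N/2} (N-2)^{(N+4)/2}; in particular it is strictly positive. -/

import Mathlib

open Real

/-- The standard Aubin–Talenti bubble `U(y) = α_N (1+|y|²)^{-(N-2)/2}`. -/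
noncomputable def Ubub (N : ℕ) (y : EuclideanSpace ℝ (Fin N)) : ℝ :=
  ((N : ℝ) * ((N : ℝ) - 2)) ^ (((N : ℝ) - 2) / 4) * (1 + ‖y‖ ^ 2) ^ (-(((N : ℝ) - 2) / 2))

/-- `ψ⁰(y) = ((N-2)/2) α_N (|y|²-1)/(1+|y|²)^{N/2}`. -/
noncomputable def psi0 (N : ℕ) (y : EuclideanSpace ℝ (Fin N)) : ℝ :=
  (((N : ℝ) - 2) / 2) * ((N : ℝ) * ((N : ℝ) - 2)) ^ (((N : ℝ) - 2) / 4) *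
    (‖y‖ ^ 2 - 1) / (1 + ‖y‖ ^ 2) ^ ((N : ℝ) / 2)

/-!
Writing `r = |y|`, `A = (N(N-2))^{N/2}` and `c = (N-2)/2`, the integrand equals
`A c (1 - r²)/(1 + r²)^{N+1} · (c log(1 + r²) - log α_N)`. In polar coordinates,
`r^{N-1}(1 - r²)/(1 + r²)^{N+1} = N⁻¹ (r^N/(1 + r²)^N)'`, and since `r^N/(1 + r²)^N` vanishes at
`0` and `∞`, integrating by parts kills the constant `log α_N` and leaves
`-(2c/N) ∫₀^∞ r^{N+1}/(1 + r²)^{N+1} dr`. The substitutions `t = r²`, `t = x/(1 - x)` turn this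
into the Beta integral `B(N/2 + 1, N/2)/2`.
-/

open MeasureTheory Set Filter Topology

theorem integral_rpow_mul_one_sub_rpow {a b : ℝ} (ha : 0 < a) (hb : 0 < b) :
    ∫ x in (0 : ℝ)..1, x ^ (a - 1) * (1 - x) ^ (b - 1) = Gamma a * Gamma b / Gamma (a + b) := by
  have hB : Complex.betaIntegral a b =
      ((∫ x in (0 : ℝ)..1, x ^ (a - 1) * (1 - x) ^ (b - 1) : ℝ) : ℂ) := by
    rw [Complex.betaIntegral, ← intervalIntegral.integral_ofReal]
    refine intervalIntegral.integral_congr fun x hx => ?_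
    rw [uIcc_of_le zero_le_one] at hx
    push_cast [Complex.ofReal_cpow hx.1, Complex.ofReal_cpow (sub_nonneg.2 hx.2)]
    rfl
  have h := Complex.betaIntegral_eq_Gamma_mul_div a b (by simpa) (by simpa)
  rw [hB, ← Complex.ofReal_add] at h
  simp only [Complex.Gamma_ofReal] at h
  exact_mod_cast h

theorem integral_Ioi_rpow_mul_one_add_rpow_neg {a b : ℝ} (ha : 0 < a) (hb : 0 < b) :
    ∫ t in Ioi (0 : ℝ), t ^ (a - 1) * (1 + t) ^ (-(a + b)) =
      Gamma a * Gamma b / Gamma (a + b) := by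
  have himg : (fun x : ℝ => x / (1 - x)) '' Ioo 0 1 = Ioi 0 := by
    ext t
    refine ⟨?_, fun (ht : 0 < t) => ⟨t / (1 + t), ⟨by positivity, ?_⟩, ?_⟩⟩
    · rintro ⟨x, hx, rfl⟩
      exact div_pos hx.1 (sub_pos.2 hx.2)
    · rw [div_lt_one (by positivity)]; linarith
    · field_simp; ring
  have hderiv : ∀ x ∈ Ioo (0 : ℝ) 1,
      HasDerivWithinAt (fun x : ℝ => x / (1 - x)) ((1 - x)⁻¹ ^ 2) (Ioo 0 1) x := by
    intro x hx
    have h1x : 1 - x ≠ 0 := (sub_pos.2 hx.2).ne'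
    refine (((hasDerivAt_id x).div ((hasDerivAt_id x).const_sub 1) h1x).congr_deriv
      ?_).hasDerivWithinAt
    simp only [id]
    field_simp
    ring
  have hinj : InjOn (fun x : ℝ => x / (1 - x)) (Ioo 0 1) := by
    intro x hx y hy hxy
    rw [div_eq_div_iff (sub_pos.2 hx.2).ne' (sub_pos.2 hy.2).ne'] at hxy
    linarith
  have hcongr : ∀ x ∈ Ioo (0 : ℝ) 1,
      |(1 - x)⁻¹ ^ 2| • ((x / (1 - x)) ^ (a - 1) * (1 + x / (1 - x)) ^ (-(a + b)))
        = x ^ (a - 1) * (1 - x) ^ (b - 1) := by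
    intro x ⟨hx0, hx1⟩
    have h1x : 0 < 1 - x := sub_pos.2 hx1
    rw [smul_eq_mul, abs_of_nonneg (by positivity), show 1 + x / (1 - x) = (1 - x)⁻¹ by
      field_simp; ring, div_rpow hx0.le h1x.le, inv_rpow h1x.le, rpow_neg h1x.le, inv_inv,
      show b - 1 = a + b - (a - 1) - 2 by ring, rpow_sub h1x _ 2, rpow_sub h1x (a + b), rpow_two]
    field_simp
  rw [← himg, integral_image_eq_integral_abs_deriv_smul measurableSet_Ioo hderiv hinj,
    setIntegral_congr_fun measurableSet_Ioo hcongr, ← integral_rpow_mul_one_sub_rpow ha hb,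
    intervalIntegral.integral_of_le zero_le_one, integral_Ioc_eq_integral_Ioo]

theorem integral_Ioi_pow_div_one_add_sq_pow {k m : ℕ} (hkm : k + 1 < 2 * m) :
    ∫ r in Ioi (0 : ℝ), r ^ k / (1 + r ^ 2) ^ m
      = Gamma ((k + 1) / 2) * Gamma (m - (k + 1) / 2) / (2 * Gamma m) := by
  set a : ℝ := ((k : ℝ) + 1) / 2
  have ha : a < m := by
    rw [div_lt_iff₀ two_pos]; exact_mod_cast (by omega : k + 1 < m * 2)
  have hsubst := integral_comp_rpow_Ioi
    (fun t : ℝ => 2⁻¹ * (t ^ (a - 1) * (1 + t) ^ (-(a + (m - a))))) two_ne_zero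
  rw [integral_const_mul, integral_Ioi_rpow_mul_one_add_rpow_neg (by positivity) (by linarith)]
    at hsubst
  rw [← setIntegral_congr_fun measurableSet_Ioi (fun r (hr : 0 < r) => ?_), hsubst]
  · ring_nf
  · rw [smul_eq_mul, rpow_two, ← rpow_natCast r 2, ← rpow_mul hr.le, add_sub_cancel,
      rpow_neg (by positivity), rpow_natCast, abs_two, show (2 : ℝ) - 1 = 1 by norm_num,
      show ((2 : ℕ) : ℝ) * (a - 1) = k - 1 by push_cast; ring, rpow_one, rpow_sub_one hr.ne',
      rpow_natCast]
    field_simp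

theorem pow_div_one_add_sq_pow_le_rpow (k m : ℕ) {r : ℝ} (hr : 0 < r) :
    r ^ k / (1 + r ^ 2) ^ m ≤ r ^ ((k : ℝ) - 2 * m) := by
  calc r ^ k / (1 + r ^ 2) ^ m ≤ r ^ k / (r ^ 2) ^ m := by gcongr; linarith
    _ = r ^ ((k : ℝ) - 2 * m) := by
      rw [rpow_sub hr, ← pow_mul, rpow_natCast, ← rpow_natCast r (2 * m)]
      push_cast
      rfl

theorem integrableOn_Ioi_pow_div_one_add_sq_pow {k m : ℕ} (hkm : k + 2 ≤ 2 * m) :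
    IntegrableOn (fun r : ℝ => r ^ k / (1 + r ^ 2) ^ m) (Ioi 0) := by
  have hcont : Continuous (fun r : ℝ => r ^ k / (1 + r ^ 2) ^ m) := by
    fun_prop (disch := intro r; positivity)
  rw [← Ioc_union_Ioi_eq_Ioi zero_le_one]
  refine (hcont.integrableOn_Icc.mono_set Ioc_subset_Icc_self).union ?_
  refine (integrableOn_Ioi_rpow_of_lt (a := (k : ℝ) - 2 * m) ?_ one_pos).mono'
    hcont.aestronglyMeasurable.restrict ?_
  · have : (k : ℝ) + 2 ≤ 2 * m := by exact_mod_cast hkm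
    linarith
  · filter_upwards [ae_restrict_mem measurableSet_Ioi] with r (hr : 1 < r)
    rw [norm_of_nonneg (by positivity)]
    exact pow_div_one_add_sq_pow_le_rpow k m (by linarith)

theorem abs_sub_mul_log_one_add_sq_le (a b r : ℝ) :
    |b * log (1 + r ^ 2) - a| ≤ (|a| + |b|) * (1 + r ^ 2) := by
  have hlog : 0 ≤ log (1 + r ^ 2) := log_nonneg (by nlinarith)
  have hlog' : log (1 + r ^ 2) ≤ 1 + r ^ 2 :=
    (log_le_sub_one_of_pos (by positivity)).trans (by linarith)
  calc |b * log (1 + r ^ 2) - a| ≤ |b| * log (1 + r ^ 2) + |a| := by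
        have h := abs_sub (b * log (1 + r ^ 2)) a
        rwa [abs_mul, abs_of_nonneg hlog] at h
    _ ≤ (|a| + |b|) * (1 + r ^ 2) := by nlinarith [abs_nonneg a, abs_nonneg b]

theorem hasDerivAt_pow_div_one_add_sq_pow (n : ℕ) (r : ℝ) :
    HasDerivAt (fun r : ℝ => r ^ n / (1 + r ^ 2) ^ n)
      (n * r ^ (n - 1) * (1 - r ^ 2) / (1 + r ^ 2) ^ (n + 1)) r := by
  have h1 : 0 < 1 + r ^ 2 := by positivity
  have hsq : HasDerivAt (fun r : ℝ => 1 + r ^ 2) (2 * r) r := by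
    simpa using (hasDerivAt_pow 2 r).const_add 1
  refine ((hasDerivAt_pow n r).div (hsq.pow n) (pow_pos h1 n).ne').congr_deriv ?_
  rcases n with _ | n
  · simp
  · simp only [Nat.add_sub_cancel, Pi.pow_apply]
    field_simp
    ring

section LogWeightedBubbleMoment

variable (n : ℕ) (a b : ℝ)

theorem hasDerivAt_pow_div_one_add_sq_pow_mul_log (r : ℝ) :
    HasDerivAt (fun r : ℝ => r ^ n / (1 + r ^ 2) ^ n * (b * log (1 + r ^ 2) - a))
      (n * (r ^ (n - 1) * ((1 - r ^ 2) / (1 + r ^ 2) ^ (n + 1) * (b * log (1 + r ^ 2) - a)))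
        + 2 * b * (r ^ (n + 1) / (1 + r ^ 2) ^ (n + 1))) r := by
  have hlog := (((hasDerivAt_pow 2 r).const_add 1).log (by positivity)).const_mul b
  refine ((hasDerivAt_pow_div_one_add_sq_pow n r).mul (hlog.sub_const a)).congr_deriv ?_
  rcases n with _ | n
  · simp; ring
  · simp only [Nat.add_sub_cancel]
    field_simp
    ring

variable {n}

theorem integrableOn_Ioi_pow_mul_one_sub_sq_mul_log (hn : 3 ≤ n) :
    IntegrableOn (fun r : ℝ =>
      r ^ (n - 1) * ((1 - r ^ 2) / (1 + r ^ 2) ^ (n + 1) * (b * log (1 + r ^ 2) - a))) (Ioi 0) := by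
  refine (((integrableOn_Ioi_pow_div_one_add_sq_pow (k := n - 1) (m := n - 1)
    (by omega)).const_mul (|a| + |b|))).mono'
    (by fun_prop (disch := intro r; positivity) : Continuous _).aestronglyMeasurable.restrict ?_
  filter_upwards [ae_restrict_mem measurableSet_Ioi] with r (hr : 0 < r)
  have hpos : 0 < 1 + r ^ 2 := by positivity
  have h1 : |1 - r ^ 2| ≤ 1 + r ^ 2 := abs_le.2 ⟨by linarith, by nlinarith⟩
  have hsplit : (1 + r ^ 2) ^ (n + 1) = (1 + r ^ 2) ^ (n - 1) * (1 + r ^ 2) ^ 2 := by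
    rw [← pow_add]; congr 1; omega
  calc _ = r ^ (n - 1) * (|1 - r ^ 2| / (1 + r ^ 2) ^ (n + 1) * |b * log (1 + r ^ 2) - a|) := by
        simp only [norm_mul, norm_div, norm_pow, Real.norm_eq_abs, abs_of_pos hr, abs_of_pos hpos]
    _ ≤ r ^ (n - 1) * ((1 + r ^ 2) / (1 + r ^ 2) ^ (n + 1) * ((|a| + |b|) * (1 + r ^ 2))) := by
        gcongr
        exact abs_sub_mul_log_one_add_sq_le a b r
    _ = (|a| + |b|) * (r ^ (n - 1) / (1 + r ^ 2) ^ (n - 1)) := by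
        rw [hsplit]
        field_simp

theorem tendsto_pow_div_one_add_sq_pow_mul_log_atTop (hn : 3 ≤ n) :
    Tendsto (fun r : ℝ => r ^ n / (1 + r ^ 2) ^ n * (b * log (1 + r ^ 2) - a)) atTop (𝓝 0) := by
  have hlim :
      Tendsto (fun r : ℝ => (|a| + |b|) * r ^ ((n : ℝ) - 2 * (n - 1 : ℕ))) atTop (𝓝 0) := by
    rw [← mul_zero (|a| + |b|)]
    refine (tendsto_rpow_neg_atTop (y := (n : ℝ) - 2)
      (by linarith [show (3 : ℝ) ≤ n by exact_mod_cast hn])).const_mul _ |>.congr' ?_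
    filter_upwards with r
    congr 2
    push_cast [show 1 ≤ n by omega]
    ring
  refine squeeze_zero_norm' ?_ hlim
  filter_upwards [eventually_gt_atTop 0] with r hr
  have hpos : 0 < 1 + r ^ 2 := by positivity
  have hsplit : (1 + r ^ 2) ^ n = (1 + r ^ 2) ^ (n - 1) * (1 + r ^ 2) := by
    rw [← pow_succ]; congr 1; omega
  calc _ = r ^ n / (1 + r ^ 2) ^ n * |b * log (1 + r ^ 2) - a| := by
        simp only [norm_mul, norm_div, norm_pow, Real.norm_eq_abs, abs_of_pos hr, abs_of_pos hpos]
    _ ≤ r ^ n / (1 + r ^ 2) ^ n * ((|a| + |b|) * (1 + r ^ 2)) := by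
        gcongr
        exact abs_sub_mul_log_one_add_sq_le a b r
    _ = (|a| + |b|) * (r ^ n / (1 + r ^ 2) ^ (n - 1)) := by
        rw [hsplit]
        field_simp
    _ ≤ _ := by gcongr; exact pow_div_one_add_sq_pow_le_rpow n (n - 1) hr

theorem integral_Ioi_pow_mul_one_sub_sq_mul_log (hn : 3 ≤ n) :
    ∫ r in Ioi (0 : ℝ),
        r ^ (n - 1) * ((1 - r ^ 2) / (1 + r ^ 2) ^ (n + 1) * (b * log (1 + r ^ 2) - a))
      = -(2 * b / n) * ∫ r in Ioi (0 : ℝ), r ^ (n + 1) / (1 + r ^ 2) ^ (n + 1) := by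
  have hF := integrableOn_Ioi_pow_mul_one_sub_sq_mul_log a b hn
  have hh := integrableOn_Ioi_pow_div_one_add_sq_pow (k := n + 1) (m := n + 1) (by omega)
  have hFTC := integral_Ioi_of_hasDerivAt_of_tendsto'
    (fun r _ => hasDerivAt_pow_div_one_add_sq_pow_mul_log n a b r)
    ((hF.const_mul n).add (hh.const_mul (2 * b)))
    (tendsto_pow_div_one_add_sq_pow_mul_log_atTop a b hn)
  rw [integral_add (hF.const_mul n) (hh.const_mul (2 * b)), integral_const_mul,
    integral_const_mul, zero_pow (by omega : n ≠ 0), zero_div, zero_mul, sub_zero] at hFTC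
  have hn0 : (n : ℝ) ≠ 0 := by positivity
  rw [neg_mul, div_mul_eq_mul_div, ← neg_div, eq_div_iff hn0]
  linarith

end LogWeightedBubbleMoment

theorem EuclideanSpace.integral_fun_norm {ι : Type*} [Fintype ι] [Nonempty ι] (f : ℝ → ℝ) :
    ∫ x : EuclideanSpace ℝ ι, f ‖x‖ =
      Fintype.card ι * (√π ^ Fintype.card ι / Gamma (Fintype.card ι / 2 + 1)) *
        ∫ r in Ioi (0 : ℝ), r ^ (Fintype.card ι - 1) * f r := by
  rw [integral_fun_norm_addHaar, finrank_euclideanSpace, measureReal_def,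
    EuclideanSpace.volume_ball, ENNReal.ofReal_one, one_pow, one_mul,
    ENNReal.toReal_ofReal (by positivity), nsmul_eq_mul, smul_eq_mul, mul_assoc]
  rfl

theorem Ubub_rpow_mul_log_mul_psi0 {N : ℕ} (hN : 3 ≤ N) (y : EuclideanSpace ℝ (Fin N)) :
    Ubub N y ^ (((N : ℝ) + 2) / ((N : ℝ) - 2)) * log (Ubub N y) * psi0 N y =
      ((N : ℝ) * ((N : ℝ) - 2)) ^ ((N : ℝ) / 2) * (((N : ℝ) - 2) / 2) *
        ((1 - ‖y‖ ^ 2) / (1 + ‖y‖ ^ 2) ^ (N + 1) *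
          (((N : ℝ) - 2) / 2 * log (1 + ‖y‖ ^ 2) -
            log (((N : ℝ) * ((N : ℝ) - 2)) ^ (((N : ℝ) - 2) / 4)))) := by
  have hN2 : (0 : ℝ) < N - 2 := by linarith [show (3 : ℝ) ≤ N by exact_mod_cast hN]
  set c : ℝ := (N : ℝ) * ((N : ℝ) - 2)
  have hc : 0 < c := by positivity
  set t : ℝ := 1 + ‖y‖ ^ 2
  have ht : 0 < t := by positivity
  have hU_pow : Ubub N y ^ (((N : ℝ) + 2) / ((N : ℝ) - 2)) =
      c ^ (((N : ℝ) + 2) / 4) * t ^ (-(((N : ℝ) + 2) / 2)) := by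
    rw [Ubub, mul_rpow (by positivity) (by positivity), ← rpow_mul hc.le, ← rpow_mul ht.le]
    congr 2 <;> field_simp
  have hlogU : log (Ubub N y) = log (c ^ (((N : ℝ) - 2) / 4)) - ((N : ℝ) - 2) / 2 * log t := by
    rw [Ubub, log_mul (by positivity) (by positivity), log_rpow ht]
    ring
  have hc_pow : c ^ (((N : ℝ) + 2) / 4) * c ^ (((N : ℝ) - 2) / 4) = c ^ ((N : ℝ) / 2) := by
    rw [← rpow_add hc]; ring_nf
  have ht_pow : t ^ (N + 1) = t ^ ((N : ℝ) / 2) * t ^ (((N : ℝ) + 2) / 2) := by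
    rw [← rpow_add ht, ← rpow_natCast]
    push_cast; ring_nf
  rw [hU_pow, hlogU, psi0, ← hc_pow, ht_pow, rpow_neg ht.le]
  field_simp
  ring

theorem integral_Ubub_rpow_mul_log_mul_psi0 {N : ℕ} (hN : 3 ≤ N) :
    ∫ y : EuclideanSpace ℝ (Fin N),
        Ubub N y ^ (((N : ℝ) + 2) / ((N : ℝ) - 2)) * log (Ubub N y) * psi0 N y
      = -(Gamma ((N : ℝ) / 2) * π ^ ((N : ℝ) / 2) / (4 * Gamma ((N : ℝ) + 1)) *
        ((N : ℝ) ^ ((N : ℝ) / 2) * ((N : ℝ) - 2) ^ (((N : ℝ) + 4) / 2))) := by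
  have hN2 : (0 : ℝ) < N - 2 := by linarith [show (3 : ℝ) ≤ N by exact_mod_cast hN]
  have : Nonempty (Fin N) := ⟨⟨0, by omega⟩⟩
  set a := log (((N : ℝ) * ((N : ℝ) - 2)) ^ (((N : ℝ) - 2) / 4))
  simp_rw [Ubub_rpow_mul_log_mul_psi0 hN]
  rw [integral_const_mul, EuclideanSpace.integral_fun_norm
      (fun r => (1 - r ^ 2) / (1 + r ^ 2) ^ (N + 1) * (((N : ℝ) - 2) / 2 * log (1 + r ^ 2) - a)),
    Fintype.card_fin, integral_Ioi_pow_mul_one_sub_sq_mul_log _ _ hN,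
    integral_Ioi_pow_div_one_add_sq_pow (by omega)]
  have hπ : √π ^ N = π ^ ((N : ℝ) / 2) := by
    rw [sqrt_eq_rpow, ← rpow_natCast, ← rpow_mul pi_pos.le]; ring_nf
  rw [show (((N + 1 : ℕ) : ℝ) + 1) / 2 = N / 2 + 1 by push_cast; ring,
    show ((N + 1 : ℕ) : ℝ) - (N / 2 + 1) = N / 2 by push_cast; ring, Nat.cast_succ, hπ,
    mul_rpow (by positivity) hN2.le, show ((N : ℝ) + 4) / 2 = N / 2 + 2 by ring, rpow_add hN2,
    rpow_two]
  have := Gamma_pos_of_pos (by positivity : (0 : ℝ) < N / 2 + 1)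
  field_simp
  ring

theorem stmt5 (N : ℕ) (hN : 3 ≤ N) :
    -∫ y : EuclideanSpace ℝ (Fin N),
        Ubub N y ^ (((N : ℝ) + 2) / ((N : ℝ) - 2)) * Real.log (Ubub N y) * psi0 N y =
      Real.Gamma ((N : ℝ) / 2) * Real.pi ^ ((N : ℝ) / 2) / (4 * Real.Gamma ((N : ℝ) + 1)) *
        ((N : ℝ) ^ ((N : ℝ) / 2) * ((N : ℝ) - 2) ^ (((N : ℝ) + 4) / 2)) ∧
    0 < -∫ y : EuclideanSpace ℝ (Fin N),
          Ubub N y ^ (((N : ℝ) + 2) / ((N : ℝ) - 2)) * Real.log (Ubub N y) * psi0 N y := by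
  have hN2 : (0 : ℝ) < N - 2 := by linarith [show (3 : ℝ) ≤ N by exact_mod_cast hN]
  rw [integral_Ubub_rpow_mul_log_mul_psi0 hN, neg_neg]
  refine ⟨rfl, mul_pos (div_pos (mul_pos ?_ (rpow_pos_of_pos pi_pos _)) (by positivity))
    (mul_pos (by positivity) (rpow_pos_of_pos hN2 _))⟩
  exact Gamma_pos_of_pos (by positivity)
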